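/- Let n, a, b, c, p, q, r be positive integers with n = p·a = q·b = r·c. Then the following are equivalent: (1) there exist permutations x, y of Fin n such that every orbit of x has size a, every orbit of y has size b, every orbit of (x*y)⁻¹ has size c, the subgroup of Equiv.Perm (Fin n) generated by x and y acts transitively on Fin n, and this subgroup has cardinality n (the uniform passport [a^p, b^q, c^r] admits a regular dessin); (2) there exist a finite group G with Fintype.card G = n and elements u, v ∈ G such that orderOf u = a, orderOf v = b, orderOf (u*v) = c, and G is generated by u and v. -/

import Mathlib

/-!
In one direction the monodromy group `⟨x, y⟩` itself, of order `n`, is the required group: when all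
orbits of a permutation have the same size, that size is its order. In the other, the left regular
representation of `G`, transported to `Fin n`, is a regular dessin: it is faithful and transitive,
and left multiplication by `w` has all orbits of size `orderOf w`, since `w ^ k * g = g` forces
`w ^ k = 1`.
-/

/-- The orbit of `e` under the permutation `σ`: `{σ^k e : k ∈ ℤ}`. -/
def permOrbit {E : Type*} (σ : Equiv.Perm E) (e : E) : Set E :=
  {f | ∃ k : ℤ, (σ ^ k) e = f}

/-- Every orbit of `σ` has exactly `a` elements. -/
def allOrbitsSize {E : Type*} (σ : Equiv.Perm E) (a : ℕ) : Prop :=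
  ∀ e : E, (permOrbit σ e).ncard = a

open MulAction Subgroup

section Orbits

variable {E : Type*}

lemma permOrbit_eq_orbit_zpowers (σ : Equiv.Perm E) (e : E) :
    permOrbit σ e = orbit (zpowers σ) e := by
  ext f
  constructor
  · rintro ⟨k, rfl⟩
    exact ⟨⟨σ ^ k, zpow_mem_zpowers σ k⟩, rfl⟩
  · rintro ⟨⟨-, k, rfl⟩, rfl⟩
    exact ⟨k, rfl⟩

lemma ncard_permOrbit (σ : Equiv.Perm E) (e : E) : (permOrbit σ e).ncard = period σ e := by
  rw [permOrbit_eq_orbit_zpowers, ← Nat.card_coe_set_eq,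
    Nat.card_congr (orbitZPowersEquiv σ e), Nat.card_zmod, period_eq_minimalPeriod]

lemma permOrbit_inv (σ : Equiv.Perm E) (e : E) : permOrbit σ⁻¹ e = permOrbit σ e := by
  ext f
  constructor <;> rintro ⟨k, rfl⟩
  · exact ⟨-k, by rw [← inv_zpow']⟩
  · exact ⟨-k, by rw [inv_zpow', neg_neg]⟩

lemma allOrbitsSize_inv_iff {σ : Equiv.Perm E} {a : ℕ} :
    allOrbitsSize σ⁻¹ a ↔ allOrbitsSize σ a := by
  simp only [allOrbitsSize, permOrbit_inv]

lemma orderOf_eq_of_allOrbitsSize [Nonempty E] {σ : Equiv.Perm E} {a : ℕ}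
    (h : allOrbitsSize σ a) : orderOf σ = a := by
  have hperiod (e : E) : period σ e = a := (ncard_permOrbit σ e).symm.trans (h e)
  refine Nat.dvd_antisymm (orderOf_dvd_of_pow_eq_one ?_) ?_
  · ext e
    exact pow_smul_eq_iff_period_dvd.mpr (hperiod e).dvd
  · obtain ⟨e⟩ := ‹Nonempty E›
    exact hperiod e ▸ period_dvd_orderOf σ e

end Orbits

section Cayley

variable {G E : Type*} [Group G]

def cayleyHom (e : G ≃ E) : G →* Equiv.Perm E :=
  e.permCongrHom.toMonoidHom.comp (toPermHom G G)

lemma cayleyHom_apply (e : G ≃ E) (w : G) (x : E) : cayleyHom e w x = e (w * e.symm x) := rfl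

lemma cayleyHom_injective (e : G ≃ E) : Function.Injective (cayleyHom e) :=
  e.permCongrHom.injective.comp toPerm_injective

lemma period_cayleyHom (e : G ≃ E) (w : G) (x : E) : period (cayleyHom e w) x = orderOf w :=
  Function.minimalPeriod_eq_minimalPeriod_iff.mpr fun n => by
    rw [isPeriodicPt_smul_iff, isPeriodicPt_mul_iff_pow_eq_one, ← map_pow, Equiv.Perm.smul_def,
      cayleyHom_apply, ← e.eq_symm_apply, mul_eq_right]

lemma allOrbitsSize_cayleyHom (e : G ≃ E) (w : G) : allOrbitsSize (cayleyHom e w) (orderOf w) :=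
  fun x => (ncard_permOrbit _ x).trans (period_cayleyHom e w x)

lemma cayleyHom_mul_inv_apply (e : G ≃ E) (x y : E) :
    cayleyHom e (e.symm y * (e.symm x)⁻¹) x = y := by
  rw [cayleyHom_apply, inv_mul_cancel_right, e.apply_symm_apply]

end Cayley

lemma Subgroup.closure_image_eq_range {G H : Type*} [Group G] [Group H] (φ : G →* H) {s : Set G}
    (hs : closure s = ⊤) : closure (φ '' s) = φ.range := by
  rw [← MonoidHom.map_closure, hs, MonoidHom.range_eq_map]

lemma Subgroup.closure_pair_mk_eq_top {G : Type*} [Group G] (x y : G) :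
    closure {(⟨x, subset_closure (by simp)⟩ : closure {x, y}), ⟨y, subset_closure (by simp)⟩} =
      ⊤ := by
  convert closure_closure_coe_preimage (k := {x, y})
  ext
  simp [Subtype.ext_iff]

theorem regular_iff_abstract_group_general (n a b c : ℕ) :
    (∃ x y : Equiv.Perm (Fin n),
      allOrbitsSize x a ∧ allOrbitsSize y b ∧ allOrbitsSize (x * y)⁻¹ c ∧
      (∀ e f : Fin n,
        ∃ g ∈ Subgroup.closure ({x, y} : Set (Equiv.Perm (Fin n))), g e = f) ∧
      Nat.card (Subgroup.closure ({x, y} : Set (Equiv.Perm (Fin n)))) = n) ↔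
    (∃ (G : Type) (_ : Group G) (_ : Fintype G), Fintype.card G = n ∧
      ∃ u v : G, orderOf u = a ∧ orderOf v = b ∧ orderOf (u * v) = c ∧
        Subgroup.closure ({u, v} : Set G) = ⊤) := by
  constructor
  · rintro ⟨x, y, hx, hy, hxy, -, hcard⟩
    have : Nonempty (Fin n) := Fin.pos_iff_nonempty.mp (hcard ▸ Nat.card_pos)
    have : Fintype (closure {x, y}) := Fintype.ofFinite _
    refine ⟨closure {x, y}, inferInstance, inferInstance, by rw [← Nat.card_eq_fintype_card, hcard],
      _, _, ?_, ?_, ?_, closure_pair_mk_eq_top x y⟩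
    · rw [orderOf_mk, orderOf_eq_of_allOrbitsSize hx]
    · rw [orderOf_mk, orderOf_eq_of_allOrbitsSize hy]
    · exact (orderOf_coe _).symm.trans (orderOf_eq_of_allOrbitsSize (allOrbitsSize_inv_iff.mp hxy))
  · rintro ⟨G, _, _, hcard, u, v, rfl, rfl, rfl, hgen⟩
    let e := Fintype.equivFinOfCardEq hcard
    have hrange : closure {cayleyHom e u, cayleyHom e v} = (cayleyHom e).range := by
      rw [← Set.image_pair, closure_image_eq_range _ hgen]
    refine ⟨cayleyHom e u, cayleyHom e v, allOrbitsSize_cayleyHom e u,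
      allOrbitsSize_cayleyHom e v, ?_, fun x y => ?_, ?_⟩
    · rw [allOrbitsSize_inv_iff, ← map_mul]
      exact allOrbitsSize_cayleyHom e (u * v)
    · exact ⟨_, hrange ▸ ⟨_, rfl⟩, cayleyHom_mul_inv_apply e x y⟩
    · rw [hrange, MonoidHom.range_eq_map, card_map_of_injective (cayleyHom_injective e), card_top,
        Nat.card_eq_fintype_card, hcard]

/-- A uniform passport `[a^p, b^q, c^r]` admits a regular dessin iff there is an
abstract group of order `n` generated by elements `u, v` with
`orderOf u = a`, `orderOf v = b`, `orderOf (u*v) = c`. -/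
theorem regular_iff_abstract_group (n a b c p q r : ℕ)
    (ha : 0 < a) (hb : 0 < b) (hc : 0 < c) (hp : 0 < p) (hq : 0 < q) (hr : 0 < r)
    (hpa : n = p * a) (hqb : n = q * b) (hrc : n = r * c) :
    (∃ x y : Equiv.Perm (Fin n),
      allOrbitsSize x a ∧ allOrbitsSize y b ∧ allOrbitsSize (x * y)⁻¹ c ∧
      (∀ e f : Fin n,
        ∃ g ∈ Subgroup.closure ({x, y} : Set (Equiv.Perm (Fin n))), g e = f) ∧
      Nat.card (Subgroup.closure ({x, y} : Set (Equiv.Perm (Fin n)))) = n) ↔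
    (∃ (G : Type) (_ : Group G) (_ : Fintype G), Fintype.card G = n ∧
      ∃ u v : G, orderOf u = a ∧ orderOf v = b ∧ orderOf (u * v) = c ∧
        Subgroup.closure ({u, v} : Set G) = ⊤) :=
  regular_iff_abstract_group_general n a b c
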